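/- arXiv:solv-int/9610001 — 2 statements merged into one kernel-verified Lean document; each statement's English description precedes it below -/
import Mathlib

section
/- With the operators A, B, C, D on g defined from R_0 and Π as in the context, let 2 ≤ m ≤ M, ℰ = Σ_{k=1}^{M−1} E_{k+1,k}, and 𝒫_{m−1} = { ℰ + w : w ∈ g, w_{ij} = 0 unless 0 ≤ j − i ≤ m−1 }. Then 𝒫_{m−1} is a Poisson submanifold for PB(A,B,C,D) in the following sense: for every u ∈ 𝒫_{m−1} and every C^∞ function φ : g → ℝ, the Hamiltonian vector field X_φ(u) = u⬝A(d'φ(u)) − D(dφ(u))⬝u + u⬝B(dφ(u)) − C(d'φ(u))⬝u satisfies (X_φ(u))_{ij} = 0 unless 0 ≤ j − i ≤ m−1, i.e. X_φ(u) is tangent to 𝒫_{m−1}. -/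
open Matrix

attribute [local instance] Matrix.normedAddCommGroup Matrix.normedSpace

/-- The gradient of `φ : g → ℝ` with respect to the trace form `⟨X,Y⟩ = trace (X⬝Y)`:
it satisfies `⟨∇φ(u), X⟩ = (fderiv ℝ φ u) X` for all `X`. -/
noncomputable def grad {M : ℕ} (φ : Matrix (Fin M) (Fin M) ℝ → ℝ)
    (u : Matrix (Fin M) (Fin M) ℝ) : Matrix (Fin M) (Fin M) ℝ :=
  Matrix.of fun i j => fderiv ℝ φ u (Matrix.single j i 1)

/-- `dφ(u) = u ⬝ ∇φ(u)` -/
noncomputable def dr {M : ℕ} (φ : Matrix (Fin M) (Fin M) ℝ → ℝ)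
    (u : Matrix (Fin M) (Fin M) ℝ) : Matrix (Fin M) (Fin M) ℝ := u * grad φ u

/-- `d'φ(u) = ∇φ(u) ⬝ u` -/
noncomputable def dl {M : ℕ} (φ : Matrix (Fin M) (Fin M) ℝ → ℝ)
    (u : Matrix (Fin M) (Fin M) ℝ) : Matrix (Fin M) (Fin M) ℝ := grad φ u * u

/-- `P_+`: the strictly lower-triangular part. -/
def Pplus {M : ℕ} (u : Matrix (Fin M) (Fin M) ℝ) : Matrix (Fin M) (Fin M) ℝ :=
  Matrix.of fun i j => if j < i then u i j else 0

/-- `P_−`: the strictly upper-triangular part. -/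
def Pminus {M : ℕ} (u : Matrix (Fin M) (Fin M) ℝ) : Matrix (Fin M) (Fin M) ℝ :=
  Matrix.of fun i j => if i < j then u i j else 0

/-- `P_0`: the diagonal part. -/
def Pzero {M : ℕ} (u : Matrix (Fin M) (Fin M) ℝ) : Matrix (Fin M) (Fin M) ℝ :=
  Matrix.of fun i j => if i = j then u i j else 0

/-- `R_0 = P_+ − P_−`. -/
def R0op {M : ℕ} (u : Matrix (Fin M) (Fin M) ℝ) : Matrix (Fin M) (Fin M) ℝ :=
  Pplus u - Pminus u

/-- `Π(u) = Σ_k (Σ_{j>k} u_{jj} − Σ_{j<k} u_{jj}) E_{kk}`. -/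
noncomputable def PiOp {M : ℕ} (u : Matrix (Fin M) (Fin M) ℝ) : Matrix (Fin M) (Fin M) ℝ :=
  Matrix.diagonal fun k =>
    (∑ j, if k < j then u j j else 0) - (∑ j, if j < k then u j j else 0)

/-- `A = (R_0 + Π)/2`. -/
noncomputable def Aop {M : ℕ} (u : Matrix (Fin M) (Fin M) ℝ) : Matrix (Fin M) (Fin M) ℝ :=
  (1 / 2 : ℝ) • (R0op u + PiOp u)

/-- `D = (R_0 − Π)/2`. -/
noncomputable def Dop {M : ℕ} (u : Matrix (Fin M) (Fin M) ℝ) : Matrix (Fin M) (Fin M) ℝ :=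
  (1 / 2 : ℝ) • (R0op u - PiOp u)

/-- `B = (P_0 − Π)/2`. -/
noncomputable def Bop {M : ℕ} (u : Matrix (Fin M) (Fin M) ℝ) : Matrix (Fin M) (Fin M) ℝ :=
  (1 / 2 : ℝ) • (Pzero u - PiOp u)

/-- `C = (P_0 + Π)/2`. -/
noncomputable def Cop {M : ℕ} (u : Matrix (Fin M) (Fin M) ℝ) : Matrix (Fin M) (Fin M) ℝ :=
  (1 / 2 : ℝ) • (Pzero u + PiOp u)

/-- The Hamiltonian vector field of `φ` for the bracket PB(A,B,C,D):
`X_φ(u) = u⬝A(d'φ(u)) − D(dφ(u))⬝u + u⬝B(dφ(u)) − C(d'φ(u))⬝u`. -/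
noncomputable def Xfield {M : ℕ} (φ : Matrix (Fin M) (Fin M) ℝ → ℝ)
    (u : Matrix (Fin M) (Fin M) ℝ) : Matrix (Fin M) (Fin M) ℝ :=
  u * Aop (dl φ u) - Dop (dr φ u) * u + u * Bop (dr φ u) - Cop (dl φ u) * u

/-- `ℰ = Σ_{k=1}^{M−1} E_{k+1,k}` (the open-end lower shift). -/
def Emat {M : ℕ} : Matrix (Fin M) (Fin M) ℝ :=
  Matrix.of fun i j => if (i : ℕ) = (j : ℕ) + 1 then 1 else 0


/-- The "s" part of the diagonal operator `Π`. -/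
noncomputable def sfun {M : ℕ} (v : Matrix (Fin M) (Fin M) ℝ) (k : Fin M) : ℝ :=
  (∑ t, if k < t then v t t else 0) - (∑ t, if t < k then v t t else 0)

lemma pminus_eq {M : ℕ} (v : Matrix (Fin M) (Fin M) ℝ) :
    Pminus v = v - Pplus v - Pzero v := by
  ext i j
  simp only [Pminus, Pplus, Pzero, Matrix.of_apply, Matrix.sub_apply, Fin.lt_def, Fin.ext_iff]
  split_ifs <;> first | ring1 | (exfalso; omega)

lemma sfun_succ {M : ℕ} (v : Matrix (Fin M) (Fin M) ℝ) (i j : Fin M)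
    (h : (i : ℕ) = (j : ℕ) + 1) : sfun v j - sfun v i = v i i + v j j := by
  have key : ∀ t : Fin M,
      ((if j < t then v t t else 0) - (if i < t then v t t else 0))
        + ((if t < i then v t t else 0) - (if t < j then v t t else 0))
      = (if t = i then v t t else 0) + (if t = j then v t t else 0) := by
    intro t
    simp only [Fin.lt_def, Fin.ext_iff]
    split_ifs <;> first | ring1 | (exfalso; omega)
  calc sfun v j - sfun v i
      = ∑ t, (((if j < t then v t t else 0) - (if i < t then v t t else 0))
        + ((if t < i then v t t else 0) - (if t < j then v t t else 0))) := by
        simp only [sfun, Finset.sum_add_distrib, Finset.sum_sub_distrib]; ring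
    _ = ∑ t, ((if t = i then v t t else 0) + (if t = j then v t t else 0)) :=
        Finset.sum_congr rfl fun t _ => key t
    _ = v i i + v j j := by
        simp [Finset.sum_add_distrib, Finset.sum_ite_eq']

lemma Xkey {M : ℕ} (m : ℕ) (u G : Matrix (Fin M) (Fin M) ℝ)
    (h0 : ∀ i j : Fin M, ((j : ℕ) + 1 < (i : ℕ) ∨ (i : ℕ) + m ≤ (j : ℕ)) → u i j = 0)
    (h1 : ∀ i j : Fin M, (i : ℕ) = (j : ℕ) + 1 → u i j = 1)
    (i j : Fin M) (hij : (j : ℕ) < (i : ℕ) ∨ (i : ℕ) + m ≤ (j : ℕ)) :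
    (u * Aop (G * u) - Dop (u * G) * u + u * Bop (u * G) - Cop (G * u) * u) i j = 0 := by
  set L := G * u with hLdef
  set R := u * G with hRdef
  have hLR : u * L = R * u := by rw [hLdef, hRdef, Matrix.mul_assoc]
  have hLRij : (u * L) i j = (R * u) i j := by rw [hLR]
  have hD1 : PiOp L + Pzero L + Pzero R - PiOp R
      = Matrix.diagonal (fun k => sfun L k + L k k + R k k - sfun R k) := by
    ext k l
    by_cases h : k = l
    · subst h
      simp only [Matrix.sub_apply, Matrix.add_apply, PiOp, Pzero, Matrix.of_apply,
        Matrix.diagonal_apply_eq, sfun, if_pos rfl, if_true, eq_self_iff_true]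
    · simp [PiOp, Pzero, Matrix.diagonal_apply_ne _ h, h]
  have h2 : u * Aop L - Dop R * u + u * Bop R - Cop L * u
      = (1/2 : ℝ) • ((u * Pplus L - Pplus R * u) + (u * Pplus L - Pplus R * u)
          + (u * Matrix.diagonal (fun k => sfun L k + L k k + R k k - sfun R k)
            - Matrix.diagonal (fun k => sfun L k + L k k + R k k - sfun R k) * u)) := by
    rw [← hD1]
    simp only [Aop, Dop, Bop, Cop, Matrix.mul_smul, Matrix.smul_mul,
      ← smul_sub, ← smul_add]
    congr 1
    simp only [R0op, pminus_eq]
    simp only [Matrix.mul_add, Matrix.add_mul, Matrix.mul_sub, Matrix.sub_mul, hLR]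
    abel
  rw [h2]
  simp only [Matrix.smul_apply, Matrix.add_apply, Matrix.sub_apply, smul_eq_mul,
    Matrix.mul_diagonal, Matrix.diagonal_mul]
  rcases hij with hlt | hge
  · by_cases hsucc : (i : ℕ) = (j : ℕ) + 1
    · -- subdiagonal entry
      have huij : u i j = 1 := h1 i j hsucc
      have hP : (u * Pplus L) i j = (u * L) i j - L j j := by
        have key : ∀ k : Fin M, u i k * Pplus L k j
            = u i k * L k j - (if k = j then L j j else 0) := by
          intro k
          simp only [Pplus, Matrix.of_apply]
          rcases lt_trichotomy k j with h | h | h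
          · have hz : u i k = 0 := h0 i k (Or.inl (by
              have := Fin.lt_def.mp h; omega))
            simp [hz, if_neg (ne_of_lt h), not_lt.mpr h.le]
          · subst h
            simp [huij]
          · simp [if_pos h, if_neg (ne_of_gt h)]
        rw [Matrix.mul_apply, Finset.sum_congr rfl (fun k _ => key k),
          Finset.sum_sub_distrib, Matrix.mul_apply]
        simp
      have hQ : (Pplus R * u) i j = (R * u) i j - R i i := by
        have key : ∀ k : Fin M, Pplus R i k * u k j
            = R i k * u k j - (if k = i then R i i else 0) := by
          intro k
          simp only [Pplus, Matrix.of_apply]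
          rcases lt_trichotomy k i with h | h | h
          · simp [if_pos h, if_neg (ne_of_lt h)]
          · subst h
            simp [huij]
          · have hz : u k j = 0 := h0 k j (Or.inl (by
              have := Fin.lt_def.mp h; omega))
            simp [hz, if_neg (ne_of_gt h), not_lt.mpr h.le]
        rw [Matrix.mul_apply, Finset.sum_congr rfl (fun k _ => key k),
          Finset.sum_sub_distrib, Matrix.mul_apply]
        simp
      have hsL := sfun_succ L i j hsucc
      have hsR := sfun_succ R i j hsucc
      rw [hP, hQ, huij]
      linarith [hLRij]
    · -- strictly below the subdiagonal
      have hji : (j : ℕ) + 1 < (i : ℕ) := by omega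
      have huij : u i j = 0 := h0 i j (Or.inl hji)
      have hP : (u * Pplus L) i j = (u * L) i j := by
        rw [Matrix.mul_apply, Matrix.mul_apply]
        refine Finset.sum_congr rfl fun k _ => ?_
        simp only [Pplus, Matrix.of_apply]
        by_cases hk : j < k
        · simp [hk]
        · have hz : u i k = 0 := h0 i k (Or.inl (by
            have : (k : ℕ) ≤ (j : ℕ) := not_lt.mp (fun h => hk (Fin.lt_def.mpr h))
            omega))
          simp [hz]
      have hQ : (Pplus R * u) i j = (R * u) i j := by
        rw [Matrix.mul_apply, Matrix.mul_apply]
        refine Finset.sum_congr rfl fun k _ => ?_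
        simp only [Pplus, Matrix.of_apply]
        by_cases hk : k < i
        · simp [hk]
        · have hz : u k j = 0 := h0 k j (Or.inl (by
            have : (i : ℕ) ≤ (k : ℕ) := not_lt.mp (fun h => hk (Fin.lt_def.mpr h))
            omega))
          simp [hz]
      rw [hP, hQ, huij, hLRij]
      ring
  · -- above the band
    have huij : u i j = 0 := h0 i j (Or.inr hge)
    have hP : (u * Pplus L) i j = 0 := by
      rw [Matrix.mul_apply]
      refine Finset.sum_eq_zero fun k _ => ?_
      simp only [Pplus, Matrix.of_apply]
      by_cases hk : j < k
      · have hz : u i k = 0 := h0 i k (Or.inr (by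
          have := Fin.lt_def.mp hk; omega))
        simp [hz]
      · simp [hk]
    have hQ : (Pplus R * u) i j = 0 := by
      rw [Matrix.mul_apply]
      refine Finset.sum_eq_zero fun k _ => ?_
      simp only [Pplus, Matrix.of_apply]
      by_cases hk : k < i
      · have hz : u k j = 0 := h0 k j (Or.inr (by
          have := Fin.lt_def.mp hk; omega))
        simp [hz]
      · simp [hk]
    rw [hP, hQ, huij]
    ring

theorem statement13 (M m : ℕ) (hM : 2 ≤ M) (hm2 : 2 ≤ m) (hmM : m ≤ M)
    (u : Matrix (Fin M) (Fin M) ℝ)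
    -- u ∈ 𝒫_{m−1} = { ℰ + w : w_{ij} = 0 unless 0 ≤ j − i ≤ m−1 }
    (hu : ∃ w : Matrix (Fin M) (Fin M) ℝ,
      (∀ i j : Fin M,
        ¬(0 ≤ ((j : ℕ) : ℤ) - ((i : ℕ) : ℤ) ∧ ((j : ℕ) : ℤ) - ((i : ℕ) : ℤ) ≤ (m : ℤ) - 1) →
          w i j = 0)
      ∧ u = Emat + w)
    (φ : Matrix (Fin M) (Fin M) ℝ → ℝ) (hφ : ContDiff ℝ (⊤ : ℕ∞) φ) :
    -- the Hamiltonian vector field is tangent to 𝒫_{m−1}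
    ∀ i j : Fin M,
      ¬(0 ≤ ((j : ℕ) : ℤ) - ((i : ℕ) : ℤ) ∧ ((j : ℕ) : ℤ) - ((i : ℕ) : ℤ) ≤ (m : ℤ) - 1) →
        Xfield φ u i j = 0 := by
  obtain ⟨w, hw, rfl⟩ := hu
  intro i j hij
  have h0 : ∀ i j : Fin M, ((j : ℕ) + 1 < (i : ℕ) ∨ (i : ℕ) + m ≤ (j : ℕ)) →
      (Emat + w : Matrix (Fin M) (Fin M) ℝ) i j = 0 := by
    intro i j h
    have hE : (Emat : Matrix (Fin M) (Fin M) ℝ) i j = 0 := by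
      simp only [Emat, Matrix.of_apply]
      rw [if_neg]
      omega
    have hwz : w i j = 0 := hw i j (by omega)
    simp [Matrix.add_apply, hE, hwz]
  have h1 : ∀ i j : Fin M, (i : ℕ) = (j : ℕ) + 1 →
      (Emat + w : Matrix (Fin M) (Fin M) ℝ) i j = 1 := by
    intro i j h
    have hE : (Emat : Matrix (Fin M) (Fin M) ℝ) i j = 1 := by
      simp [Emat, h]
    have hwz : w i j = 0 := hw i j (by omega)
    simp [Matrix.add_apply, hE, hwz]
  have hij' : (j : ℕ) < (i : ℕ) ∨ (i : ℕ) + m ≤ (j : ℕ) := by omega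
  have := Xkey m (Emat + w) (grad φ (Emat + w)) h0 h1 i j hij'
  simpa [Xfield, dl, dr] using this
end

section
/- For every z ∈ ℝ^M, every real λ ≠ 0 and every μ ∈ ℝ: det(T(z,λ)^m − μ·I_M) = Π_{j=1}^{m} det(L_j(λ^m) − μ·I_N); moreover all the factors are mutually equal, i.e. det(L_i(λ') − μ·I_N) = det(L_j(λ') − μ·I_N) for all 1 ≤ i, j ≤ m and every real λ' ≠ 0. -/
/-!
Write `i = m k + c` (`k < N`, `c < m`) for the indices of `ℝ^M`. In these coordinates `T(z,λ)`
moves residue class `c` to class `c + 1`, so it is `λ` times a cyclic block shift whose blocks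
are `V_2, …, V_m` and `λ^{-m} U_1`, all evaluated at `λ^m` (using `λ^{1-m} = λ · λ^{-m}`).
The `m`-th power of a cyclic block shift is block diagonal, its diagonal blocks being the
products of the blocks once around the cycle, started at each class; these are the
`λ^{-m} L_j(λ^m)`, and the powers of `λ` cancel. The factors agree because `L_j = P Q` and
`L_m = Q P` for suitable `P, Q`, and `det (P Q - μ) = det (Q P - μ)`.
-/

open Matrix

open Fin.NatCast in
/-- The periodic Bogoyavlensky Lax matrix
`T(z,λ) = λ^{1−m} Σ_k z_k E_{k,k+m−1} + λ Σ_k E_{k+1,k}` (indices mod M), real λ. -/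
noncomputable def Tm (m M : ℕ) [NeZero M] (z : Fin M → ℝ) (lam : ℝ) :
    Matrix (Fin M) (Fin M) ℝ :=
  lam ^ ((1 : ℤ) - (m : ℤ)) • (∑ k : Fin M, Matrix.single k (k + ((m - 1 : ℕ) : Fin M)) (z k))
    + lam • ∑ k : Fin M, Matrix.single (k + 1) k 1

open Fin.NatCast in
/-- `v_k^{(j)} = z_{m(k−1)+j}` (here `k : Fin N` is 0-based, `j` is 1-based). -/
def vv (m : ℕ) (N M : ℕ) [NeZero M] (z : Fin M → ℝ) (j : ℕ) (k : Fin N) : ℝ :=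
  z ((m * k.val + (j - 1) : ℕ) : Fin M)

/-- `U_1(λ) = λ Σ_k E_{k+1,k} + Σ_k v_k^{(1)} E_{kk}` (indices mod N). -/
noncomputable def U1 (m N M : ℕ) [NeZero N] [NeZero M] (z : Fin M → ℝ) (lam : ℝ) :
    Matrix (Fin N) (Fin N) ℝ :=
  lam • (∑ k : Fin N, Matrix.single (k + 1) k 1)
    + ∑ k : Fin N, Matrix.single k k (vv m N M z 1 k)

/-- `V_j(λ) = I + λ⁻¹ Σ_k v_k^{(j)} E_{k,k+1}` (indices mod N, `j` 1-based). -/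
noncomputable def Vm (m N M : ℕ) [NeZero N] [NeZero M] (z : Fin M → ℝ) (j : ℕ) (lam : ℝ) :
    Matrix (Fin N) (Fin N) ℝ :=
  1 + lam⁻¹ • ∑ k : Fin N, Matrix.single k (k + 1) (vv m N M z j k)

/-- `L_j(λ) = V_j ⬝ ⋯ ⬝ V_2 ⬝ U_1 ⬝ V_m ⬝ ⋯ ⬝ V_{j+1}` (`j` 1-based, `1 ≤ j ≤ m`). -/
noncomputable def Lm (m N M : ℕ) [NeZero N] [NeZero M] (z : Fin M → ℝ) (j : ℕ) (lam : ℝ) :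
    Matrix (Fin N) (Fin N) ℝ :=
  (((List.range' 2 (j - 1)).reverse.map (fun t => Vm m N M z t lam)).prod)
    * U1 m N M z lam
    * (((List.range' (j + 1) (m - j)).reverse.map (fun t => Vm m N M z t lam)).prod)

open Fin.NatCast

namespace Matrix

theorem det_mul_sub_smul_one_comm {n R : Type*} [Fintype n] [DecidableEq n] [CommRing R]
    (A B : Matrix n n R) (μ : R) : (A * B - μ • 1).det = (B * A - μ • 1).det := by
  have h (C : Matrix n n R) : (C - μ • 1).det = (-1) ^ Fintype.card n * C.charpoly.eval μ := by
    rw [eval_charpoly, ← neg_sub, det_neg, scalar_apply, smul_one_eq_diagonal]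
  rw [h, h, charpoly_mul_comm]

section blockShift

variable {m : ℕ} [NeZero m] {n R : Type*}

def blockShift [Zero R] (s : Fin m) (f : Fin m → Matrix n n R) :
    Matrix (n × Fin m) (n × Fin m) R :=
  of fun p q => if p.2 = q.2 + s then f q.2 p.1 q.1 else 0

theorem blockShift_zero [Zero R] (f : Fin m → Matrix n n R) :
    blockShift 0 f = blockDiagonal f := by
  ext ⟨k, c⟩ ⟨k', c'⟩
  simp only [blockShift, blockDiagonal_apply, of_apply, add_zero]
  split_ifs with h <;> simp [h]

variable [Fintype n] [Semiring R]

theorem blockShift_mul (s t : Fin m) (f g : Fin m → Matrix n n R) :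
    blockShift s f * blockShift t g = blockShift (s + t) (fun c => f (c + t) * g c) := by
  ext ⟨k, c⟩ ⟨k', c'⟩
  simp only [blockShift, mul_apply, of_apply, Fintype.sum_prod_type, ite_mul, zero_mul,
    mul_ite, mul_zero]
  rw [Finset.sum_comm]
  simp only [Finset.sum_ite_irrel, Finset.sum_const_zero, Finset.sum_ite_eq', Finset.mem_univ,
    if_true]
  rw [add_assoc, add_comm t s]

variable [DecidableEq n]

def cycleProd (C : Fin m → Matrix n n R) : ℕ → Fin m → Matrix n n R
  | 0, _ => 1
  | k + 1, c => cycleProd C k (c + 1) * C c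

theorem blockShift_one_pow (C : Fin m → Matrix n n R) (k : ℕ) :
    blockShift 1 C ^ k = blockShift k (cycleProd C k) := by
  induction k with
  | zero => rw [pow_zero, Nat.cast_zero, blockShift_zero]; exact blockDiagonal_one.symm
  | succ k ih => rw [pow_succ, ih, blockShift_mul, Nat.cast_succ]; rfl

theorem cycleProd_add (C : Fin m → Matrix n n R) (a b : ℕ) (c : Fin m) :
    cycleProd C (a + b) c = cycleProd C a (c + b) * cycleProd C b c := by
  induction b generalizing c with
  | zero => simp [cycleProd]
  | succ b ih =>
    rw [← add_assoc, cycleProd, ih, cycleProd, mul_assoc, Nat.cast_succ, add_comm (b : Fin m),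
      add_assoc]

end blockShift

end Matrix

section entries

variable {m N M : ℕ} [NeZero N] [NeZero M]

theorem Tm_apply (z : Fin M → ℝ) (lam : ℝ) (i j : Fin M) :
    Tm m M z lam i j
      = (if j = i + ((m - 1 : ℕ) : Fin M) then lam ^ ((1 : ℤ) - m) * z i else 0)
        + (if i = j + 1 then lam else 0) := by
  simp [Tm, Matrix.sum_apply, single_apply, and_comm, ite_and, eq_comm]

theorem U1_apply (z : Fin M → ℝ) (lam : ℝ) (k k' : Fin N) :
    U1 m N M z lam k k'
      = (if k = k' + 1 then lam else 0) + (if k = k' then vv m N M z 1 k else 0) := by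
  simp [U1, Matrix.sum_apply, single_apply, and_comm, ite_and, eq_comm]

theorem Vm_apply (z : Fin M → ℝ) (j : ℕ) (lam : ℝ) (k k' : Fin N) :
    Vm m N M z j lam k k'
      = (if k = k' then 1 else 0) + (if k' = k + 1 then lam⁻¹ * vv m N M z j k else 0) := by
  simp [Vm, Matrix.sum_apply, single_apply, one_apply, ite_and, eq_comm]

end entries

section blockIndex

variable {m N M : ℕ} [NeZero m] [NeZero N] [NeZero M] (hM : M = m * N)

def blockIndex : Fin N × Fin m ≃ Fin M :=
  finProdFinEquiv.trans (finCongr (by rw [hM, mul_comm]))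

omit [NeZero m] [NeZero N] in
theorem blockIndex_apply (p : Fin N × Fin m) :
    blockIndex hM p = ((m * p.1.val + p.2.val : ℕ) : Fin M) := by
  ext
  rw [Fin.val_natCast, Nat.mod_eq_of_lt (by rw [add_comm]; exact (blockIndex hM p).isLt)]
  simp [blockIndex, add_comm]

omit [NeZero m] in
theorem natCast_mul_add_eq_blockIndex (a : ℕ) (c : Fin m) :
    ((m * a + c.val : ℕ) : Fin M) = blockIndex hM (a, c) := by
  rw [blockIndex_apply, Fin.val_natCast, Fin.ext_iff, Fin.val_natCast, Fin.val_natCast, hM]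
  conv_lhs => rw [← Nat.mod_add_div a N]
  rw [mul_add, add_right_comm, ← mul_assoc, Nat.add_mul_mod_self_left]

def blockSucc (p : Fin N × Fin m) : Fin N × Fin m :=
  (if p.2.val + 1 = m then p.1 + 1 else p.1, p.2 + 1)

theorem blockIndex_blockSucc (p : Fin N × Fin m) :
    blockIndex hM (blockSucc p) = blockIndex hM p + 1 := by
  obtain ⟨k, c⟩ := p
  rw [blockIndex_apply hM (k, c)]
  dsimp only
  rw [← Nat.cast_add_one, add_assoc]
  by_cases hc : c.val + 1 = m
  · rw [hc, ← mul_add_one, ← add_zero (m * _), ← Fin.val_zero m,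
      natCast_mul_add_eq_blockIndex hM]
    congr 1
    simp [blockSucc, hc, Fin.ext_iff, Fin.val_add]
  · rw [← Fin.val_add_one_of_lt' (by have := c.isLt; omega), natCast_mul_add_eq_blockIndex hM]
    simp [blockSucc, hc]

omit [NeZero m] in
theorem blockIndex_add_fst (p : Fin N × Fin m) :
    blockIndex hM (p.1 + 1, p.2) = blockIndex hM p + m := by
  rw [blockIndex_apply hM p, ← Nat.cast_add, add_right_comm, ← mul_add_one,
    natCast_mul_add_eq_blockIndex hM]
  simp

omit [NeZero m] [NeZero N] in
theorem vv_eq_blockIndex (z : Fin M → ℝ) (j : ℕ) (k : Fin N) (c : Fin m)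
    (hc : c.val = j - 1) :
    vv m N M z j k = z (blockIndex hM (k, c)) := by
  rw [vv, blockIndex_apply, hc]

theorem Tm_blockIndex_apply (z : Fin M → ℝ) (lam : ℝ) (p q : Fin N × Fin m) :
    Tm m M z lam (blockIndex hM p) (blockIndex hM q)
      = (if blockSucc q = (p.1 + 1, p.2) then lam ^ ((1 : ℤ) - m) * z (blockIndex hM p)
          else 0)
        + (if p = blockSucc q then lam else 0) := by
  have h_shift (i j : Fin M) : j = i + ((m - 1 : ℕ) : Fin M) ↔ j + 1 = i + m := by
    rw [← add_left_inj 1, add_assoc, ← Nat.cast_add_one, Nat.sub_add_cancel NeZero.one_le]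
  simp only [Tm_apply, h_shift, ← blockIndex_blockSucc, ← blockIndex_add_fst,
    (blockIndex hM).apply_eq_iff_eq]

end blockIndex

section laxBlock

variable {m N M : ℕ} [NeZero m] [NeZero N] [NeZero M]

noncomputable def laxBlock (z : Fin M → ℝ) (Λ : ℝ) (c : Fin m) :
    Matrix (Fin N) (Fin N) ℝ :=
  if c.val + 1 = m then Λ⁻¹ • U1 m N M z Λ else Vm m N M z (c.val + 2) Λ

theorem Tm_submatrix_blockIndex (hM : M = m * N) (z : Fin M → ℝ) (lam : ℝ)
    (hlam : lam ≠ 0) :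
    (Tm m M z lam).submatrix (blockIndex hM) (blockIndex hM)
      = lam • blockShift 1 (laxBlock z (lam ^ m)) := by
  ext ⟨k, c⟩ ⟨k', c'⟩
  simp only [submatrix_apply, Tm_blockIndex_apply, Matrix.smul_apply, blockShift, of_apply,
    smul_eq_mul]
  by_cases hcc : c = c' + 1
  swap
  · simp [blockSucc, Prod.ext_iff, hcc, eq_comm]
  subst hcc
  have hpow : lam ^ ((1 : ℤ) - m) = lam * (lam ^ m)⁻¹ := by
    rw [zpow_sub₀ hlam, zpow_one, zpow_natCast, div_eq_mul_inv]
  by_cases hc : c'.val + 1 = m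
  · have hz : z (blockIndex hM (k, c' + 1)) = vv m N M z 1 k := by
      rw [vv_eq_blockIndex hM]; simp [Fin.val_add, hc]
    simp only [blockSucc, laxBlock, hc, if_true, Matrix.smul_apply, smul_eq_mul, U1_apply, hz, hpow,
      Prod.mk.injEq, add_left_inj, and_true]
    split_ifs <;> subst_vars <;> simp_all [mul_add, ← mul_assoc, add_comm]
  · have hz : z (blockIndex hM (k, c' + 1)) = vv m N M z (c'.val + 2) k := by
      rw [vv_eq_blockIndex hM _ _ _ _ (Fin.val_add_one_of_lt' (by have := c'.isLt; omega))]
    simp only [blockSucc, laxBlock, hc, if_false, Vm_apply, hz, hpow, Prod.mk.injEq, and_true]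
    split_ifs <;> subst_vars <;> simp_all [mul_add, ← mul_assoc, add_comm]

theorem cycleProd_laxBlock_of_add_lt (z : Fin M → ℝ) (Λ : ℝ) (a n : ℕ) (h : a + n < m) :
    cycleProd (laxBlock z Λ) n (a : Fin m)
      = ((List.range' (a + 2) n).reverse.map (fun t => Vm m N M z t Λ)).prod := by
  induction n generalizing a with
  | zero => rfl
  | succ n ih =>
    have hblock : laxBlock z Λ (a : Fin m) = Vm m N M z (a + 2) Λ := by
      rw [laxBlock, if_neg] <;> rw [Fin.val_natCast, Nat.mod_eq_of_lt (by omega)]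
      omega
    rw [cycleProd, ← Nat.cast_succ, ih (a + 1) (by omega), hblock, List.range'_succ]
    simp [add_assoc]

theorem cycleProd_laxBlock (z : Fin M → ℝ) (Λ : ℝ) (c : Fin m) :
    cycleProd (laxBlock z Λ) m c = Λ⁻¹ • Lm m N M z (c.val + 1) Λ := by
  have hc := c.isLt
  have hsplit := cycleProd_add (laxBlock (N := N) z Λ) (c.val + 1) (m - 1 - c.val) c
  rw [show c.val + 1 + (m - 1 - c.val) = m by omega] at hsplit
  have hlast : c + ((m - 1 - c.val : ℕ) : Fin m) = ((m - 1 : ℕ) : Fin m) := by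
    nth_rewrite 1 [← Fin.cast_val_eq_self c]
    rw [← Nat.cast_add, Nat.add_sub_cancel' (by omega)]
  have hwrap : ((m - 1 : ℕ) : Fin m) + 1 = ((0 : ℕ) : Fin m) := by
    rw [← Nat.cast_add_one, Nat.sub_add_cancel NeZero.one_le, Fin.natCast_self, Nat.cast_zero]
  have hblock : laxBlock z Λ ((m - 1 : ℕ) : Fin m) = Λ⁻¹ • U1 m N M z Λ := by
    rw [laxBlock, if_pos]
    rw [Fin.val_natCast, Nat.mod_eq_of_lt (by omega)]
    omega
  have htail := cycleProd_laxBlock_of_add_lt (m := m) (N := N) z Λ c.val (m - 1 - c.val)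
    (by omega)
  rw [Fin.cast_val_eq_self] at htail
  rw [hsplit, hlast, cycleProd, hwrap, hblock,
    cycleProd_laxBlock_of_add_lt (m := m) z Λ 0 c.val (by omega), htail, Lm,
    mul_smul_comm, smul_mul_assoc, show m - (c.val + 1) = m - 1 - c.val by omega]
  rfl

theorem Tm_pow_submatrix_blockIndex (hM : M = m * N) (z : Fin M → ℝ) (lam : ℝ)
    (hlam : lam ≠ 0) :
    (Tm m M z lam ^ m).submatrix (blockIndex hM) (blockIndex hM)
      = blockDiagonal fun c : Fin m => Lm m N M z (c.val + 1) (lam ^ m) := by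
  have hpow := map_pow (reindexAlgEquiv ℝ ℝ (blockIndex hM).symm) (Tm m M z lam) m
  simp only [coe_reindexAlgEquiv, reindex_apply, Equiv.symm_symm] at hpow
  rw [hpow, Tm_submatrix_blockIndex hM z lam hlam, smul_pow, blockShift_one_pow,
    Fin.natCast_self, blockShift_zero, ← blockDiagonal_smul]
  congr 1
  ext1 c
  rw [Pi.smul_apply, cycleProd_laxBlock, smul_smul, mul_inv_cancel₀ (pow_ne_zero m hlam),
    one_smul]

end laxBlock

theorem det_Lm_sub_smul_one_eq {m N M : ℕ} [NeZero N] [NeZero M] (z : Fin M → ℝ) (j : ℕ)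
    (hj : 1 ≤ j) (hjm : j ≤ m) (lam μ : ℝ) :
    (Lm m N M z j lam - μ • 1).det = (Lm m N M z m lam - μ • 1).det := by
  set V := fun t => Vm m N M z t lam
  set P := ((List.range' 2 (j - 1)).reverse.map V).prod * U1 m N M z lam
  set Q := ((List.range' (j + 1) (m - j)).reverse.map V).prod
  have hQP : Q * P = Lm m N M z m lam := by
    have hrange : List.range' 2 (j - 1) ++ List.range' (j + 1) (m - j) = List.range' 2 (m - 1) := by
      rw [show j + 1 = 2 + (j - 1) by omega, List.range'_append_1,
        show j - 1 + (m - j) = m - 1 by omega]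
    rw [Lm, Nat.sub_self, List.range'_zero, List.reverse_nil, List.map_nil, List.prod_nil, mul_one,
      ← mul_assoc, ← List.prod_append, ← List.map_append, ← List.reverse_append, hrange]
  rw [show Lm m N M z j lam = P * Q from rfl, det_mul_sub_smul_one_comm, hQP]

theorem statement16_general (m N M : ℕ) (hM : M = m * N)
    [NeZero N] [NeZero M]
    (z : Fin M → ℝ) (lam : ℝ) (hlam : lam ≠ 0) (μ : ℝ) :
    ((Tm m M z lam ^ m - μ • (1 : Matrix (Fin M) (Fin M) ℝ)).det
        = ∏ j ∈ Finset.Icc 1 m,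
            (Lm m N M z j (lam ^ m) - μ • (1 : Matrix (Fin N) (Fin N) ℝ)).det)
    ∧ (∀ i j : ℕ, 1 ≤ i → i ≤ m → 1 ≤ j → j ≤ m → ∀ lam' : ℝ, lam' ≠ 0 →
        (Lm m N M z i lam' - μ • (1 : Matrix (Fin N) (Fin N) ℝ)).det
          = (Lm m N M z j lam' - μ • (1 : Matrix (Fin N) (Fin N) ℝ)).det) := by
  have : NeZero m := ⟨by rintro rfl; exact NeZero.ne M (by simpa using hM)⟩
  refine ⟨?_, fun i j hi him hj hjm lam' _ => by
    rw [det_Lm_sub_smul_one_eq z i hi him, det_Lm_sub_smul_one_eq z j hj hjm]⟩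
  rw [← det_reindexAlgEquiv ℝ ℝ (blockIndex hM).symm, map_sub, map_smul, map_one,
    coe_reindexAlgEquiv, reindex_apply, Equiv.symm_symm,
    Tm_pow_submatrix_blockIndex hM z lam hlam, ← blockDiagonal_one,
    ← blockDiagonal_smul, ← blockDiagonal_sub, det_blockDiagonal]
  simp only [Pi.sub_apply, Pi.smul_apply, Pi.one_apply]
  rw [Fin.prod_univ_eq_prod_range (fun j => (Lm m N M z (j + 1) (lam ^ m) - μ • 1).det),
    Finset.range_eq_Ico, Finset.prod_Ico_add' (fun j => (Lm m N M z j (lam ^ m) - μ • 1).det),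
    zero_add, Finset.Ico_add_one_right_eq_Icc]

/-- `det(T(z,λ)^m − μI_M) = Π_{j=1}^m det(L_j(λ^m) − μI_N)`, and all the factors
are mutually equal. -/
theorem statement16 (m N M : ℕ) (hm : 2 ≤ m) (hN : 2 ≤ N) (hM : M = m * N)
    [NeZero N] [NeZero M]
    (z : Fin M → ℝ) (lam : ℝ) (hlam : lam ≠ 0) (μ : ℝ) :
    ((Tm m M z lam ^ m - μ • (1 : Matrix (Fin M) (Fin M) ℝ)).det
        = ∏ j ∈ Finset.Icc 1 m,
            (Lm m N M z j (lam ^ m) - μ • (1 : Matrix (Fin N) (Fin N) ℝ)).det)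
    ∧ (∀ i j : ℕ, 1 ≤ i → i ≤ m → 1 ≤ j → j ≤ m → ∀ lam' : ℝ, lam' ≠ 0 →
        (Lm m N M z i lam' - μ • (1 : Matrix (Fin N) (Fin N) ℝ)).det
          = (Lm m N M z j lam' - μ • (1 : Matrix (Fin N) (Fin N) ℝ)).det) :=
  statement16_general m N M hM z lam hlam μ
end
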